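/- arXiv:1310.5764 — 2 statements merged into one kernel-verified Lean document; each statement's English description precedes it below -/
import Mathlib

section
/- Let μ₁,…,μₙ ∈ [1/2, 1], μ̄ = (1/n)∑ᵢ μᵢ and ν̄ = (1/n)∑ᵢ (2μᵢ - 1)². If 1/2 ≤ μ̄ ≤ 2/3, then ν̄ ≥ (1/3)·D(μ̄‖1-μ̄), where D(μ̄‖1-μ̄) = (2μ̄-1)·log(μ̄/(1-μ̄)). -/
/-!
Writing `m` for the mean of the `μ i`, the mean of `2 μ i - 1` is `2m - 1`, so Jensen's inequality
for the square gives `ν̄ ≥ (2m - 1)²`. On the other side `log x ≤ x - 1` at `x = m / (1 - m)` gives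
`D(m‖1-m) ≤ (2m - 1)² / (1 - m)`, and `1 / (1 - m) ≤ 3` as long as `m ≤ 2/3`.
-/

open Finset Real

theorem two_mul_sub_one_mul_log_div_one_sub_le {m : ℝ} (hm : 1 / 2 ≤ m) (hm1 : m < 1) :
    (2 * m - 1) * log (m / (1 - m)) ≤ (2 * m - 1) ^ 2 / (1 - m) := by
  have hlog : log (m / (1 - m)) ≤ (2 * m - 1) / (1 - m) := by
    have hsub : m / (1 - m) - 1 = (2 * m - 1) / (1 - m) := by
      field_simp [(sub_pos.2 hm1).ne']
      ring
    exact hsub ▸ log_le_sub_one_of_pos (div_pos (by linarith) (sub_pos.2 hm1))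
  calc (2 * m - 1) * log (m / (1 - m)) ≤ (2 * m - 1) * ((2 * m - 1) / (1 - m)) :=
        mul_le_mul_of_nonneg_left hlog (by linarith)
    _ = (2 * m - 1) ^ 2 / (1 - m) := by ring

theorem nu_bar_ge_third_kl_general (n : ℕ) (μ : Fin n → ℝ)
    (hlow : 1/2 ≤ (1 / (n:ℝ)) * ∑ j, μ j)
    (hhigh : (1 / (n:ℝ)) * ∑ j, μ j ≤ 2/3) :
    (1 / (n:ℝ)) * ∑ i, (2 * μ i - 1) ^ 2
      ≥ (1/3) * ((2 * ((1 / (n:ℝ)) * ∑ j, μ j) - 1)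
          * Real.log (((1 / (n:ℝ)) * ∑ j, μ j) / (1 - (1 / (n:ℝ)) * ∑ j, μ j))) := by
  set m := (1 / (n:ℝ)) * ∑ j, μ j with hm
  -- for `n = 0` the mean is the junk value `1 / 0 * 0 = 0`, which `hlow` excludes
  have hn : (n : ℝ) ≠ 0 := by
    rintro hn
    simp only [hm, hn, div_zero, zero_mul] at hlow
    norm_num at hlow
  have hmean : (1 / (n:ℝ)) * ∑ i, (2 * μ i - 1) = 2 * m - 1 := by
    simp only [hm, sum_sub_distrib, ← mul_sum, sum_const, card_univ, Fintype.card_fin,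
      nsmul_eq_mul, mul_one]
    field_simp
  calc (1 / 3) * ((2 * m - 1) * log (m / (1 - m)))
      ≤ (1 / 3) * ((2 * m - 1) ^ 2 / (1 - m)) := by
        gcongr
        exact two_mul_sub_one_mul_log_div_one_sub_le hlow (by linarith)
    _ ≤ (2 * m - 1) ^ 2 := by
        have hdiv : (2 * m - 1) ^ 2 / (1 - m) ≤ 3 * (2 * m - 1) ^ 2 := by
          rw [div_le_iff₀ (by linarith)]
          nlinarith [sq_nonneg (2 * m - 1)]
        linarith
    _ = ((1 / (n:ℝ)) * ∑ i, (2 * μ i - 1)) ^ 2 := by rw [hmean]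
    _ ≤ (1 / (n:ℝ)) * ∑ i, (2 * μ i - 1) ^ 2 := by
        simpa only [one_div_mul_eq_div, card_univ, Fintype.card_fin] using
          sum_div_card_sq_le_sum_sq_div_card (s := univ) (f := fun i => 2 * μ i - 1)

theorem nu_bar_ge_third_kl (n : ℕ) (hn : 1 ≤ n) (μ : Fin n → ℝ)
    (hμ : ∀ i, μ i ∈ Set.Icc (1/2 : ℝ) 1)
    (hlow : 1/2 ≤ (1 / (n:ℝ)) * ∑ j, μ j)
    (hhigh : (1 / (n:ℝ)) * ∑ j, μ j ≤ 2/3) :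
    (1 / (n:ℝ)) * ∑ i, (2 * μ i - 1) ^ 2
      ≥ (1/3) * ((2 * ((1 / (n:ℝ)) * ∑ j, μ j) - 1)
          * Real.log (((1 / (n:ℝ)) * ∑ j, μ j) / (1 - (1 / (n:ℝ)) * ∑ j, μ j))) :=
  nu_bar_ge_third_kl_general n μ hlow hhigh
end

section
/- Let p ∈ (0,1), r ∈ [0,1], and q = p(1-r) + (1-p)r. Then |log(q/(1-q)) - log(p/(1-p))| ≤ 2r·|2p-1| / min(p, 1-p). -/
lemma abs_log_sub_log_le (x y : ℝ) (hx : 0 < x) (hy : 0 < y) :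
    |Real.log x - Real.log y| ≤ |x - y| / min x y := by
  wlog h : y ≤ x generalizing x y
  · have := this y x hy hx (le_of_not_ge h)
    rw [abs_sub_comm (Real.log x), abs_sub_comm x y, min_comm]; exact this
  rw [min_eq_right h, abs_of_nonneg (by linarith : (0:ℝ) ≤ x - y),
    abs_of_nonneg (by simpa using Real.log_le_log hy h)]
  have h1 : Real.log x - Real.log y = Real.log (x / y) := (Real.log_div hx.ne' hy.ne').symm
  rw [h1]
  have h2 : Real.log (x / y) ≤ x / y - 1 := Real.log_le_sub_one_of_pos (div_pos hx hy)
  have : x / y - 1 = (x - y) / y := by field_simp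
  linarith [h2, this.le, this.ge]

theorem log_odds_perturbation (p r : ℝ) (hp : p ∈ Set.Ioo (0:ℝ) 1)
    (hr : r ∈ Set.Icc (0:ℝ) 1) :
    |Real.log ((p * (1 - r) + (1 - p) * r) / (1 - (p * (1 - r) + (1 - p) * r)))
        - Real.log (p / (1 - p))|
      ≤ 2 * r * |2 * p - 1| / min p (1 - p) := by
  obtain ⟨hp0, hp1⟩ := hp
  obtain ⟨hr0, hr1⟩ := hr
  set q := p * (1 - r) + (1 - p) * r with hq
  have hm : 0 < min p (1 - p) := lt_min hp0 (by linarith)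
  have hqm : min p (1 - p) ≤ q := by
    rcases le_total p (1 - p) with h | h
    · rw [min_eq_left h]; nlinarith
    · rw [min_eq_right h]; nlinarith
  have hq1m : min p (1 - p) ≤ 1 - q := by
    rcases le_total p (1 - p) with h | h
    · rw [min_eq_left h]; nlinarith
    · rw [min_eq_right h]; nlinarith
  have hq0 : 0 < q := lt_of_lt_of_le hm hqm
  have hq1 : 0 < 1 - q := lt_of_lt_of_le hm hq1m
  have hA := abs_log_sub_log_le q p hq0 hp0
  have hB := abs_log_sub_log_le (1 - q) (1 - p) hq1 (by linarith)
  have hminq : min p (1 - p) ≤ min q p := le_min hqm (min_le_left _ _)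
  have hmin1q : min p (1 - p) ≤ min (1 - q) (1 - p) := le_min hq1m (min_le_right _ _)
  have hd1 : |q - p| = r * |2 * p - 1| := by
    rw [show q - p = r * (1 - 2 * p) by rw [hq]; ring, abs_mul, abs_of_nonneg hr0,
      abs_sub_comm]
  have hd2 : |1 - q - (1 - p)| = r * |2 * p - 1| := by
    rw [show 1 - q - (1 - p) = r * (2 * p - 1) by rw [hq]; ring, abs_mul, abs_of_nonneg hr0]
  have hA' : |Real.log q - Real.log p| ≤ r * |2 * p - 1| / min p (1 - p) := by
    calc |Real.log q - Real.log p| ≤ |q - p| / min q p := hA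
      _ ≤ r * |2 * p - 1| / min p (1 - p) := by
          rw [hd1]; exact div_le_div_of_nonneg_left (by positivity) hm hminq
  have hB' : |Real.log (1 - q) - Real.log (1 - p)| ≤ r * |2 * p - 1| / min p (1 - p) := by
    calc |Real.log (1 - q) - Real.log (1 - p)| ≤ |1 - q - (1 - p)| / min (1 - q) (1 - p) := hB
      _ ≤ r * |2 * p - 1| / min p (1 - p) := by
          rw [hd2]; exact div_le_div_of_nonneg_left (by positivity) hm hmin1q
  rw [Real.log_div hq0.ne' hq1.ne', Real.log_div hp0.ne' (by linarith : (1:ℝ) - p ≠ 0)]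
  have key : |Real.log q - Real.log (1 - q) - (Real.log p - Real.log (1 - p))|
      ≤ |Real.log q - Real.log p| + |Real.log (1 - q) - Real.log (1 - p)| := by
    have := abs_sub (Real.log q - Real.log p) (Real.log (1 - q) - Real.log (1 - p))
    calc |Real.log q - Real.log (1 - q) - (Real.log p - Real.log (1 - p))|
        = |(Real.log q - Real.log p) - (Real.log (1 - q) - Real.log (1 - p))| := by ring_nf
      _ ≤ _ := abs_sub _ _
  calc _ ≤ |Real.log q - Real.log p| + |Real.log (1 - q) - Real.log (1 - p)| := key
    _ ≤ r * |2 * p - 1| / min p (1 - p) + r * |2 * p - 1| / min p (1 - p) := add_le_add hA' hB'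
    _ = 2 * r * |2 * p - 1| / min p (1 - p) := by ring
end
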